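/- Mechanism 1 DSE-implements maxmin welfare: truth-telling is a dominant strategy equilibrium, and in every dominant strategy equilibrium (a profile of reports in which each agent's report is a dominant strategy with respect to her true desired set), the resulting allocation is maxmin-optimal with respect to the true utilities; moreover, every agent's true utility in any dominant strategy equilibrium equals her true utility in the truthful outcome. -/

import Mathlib

/-!
An agent whose report contains her true desired set receives `γ*` of every good she wants;
otherwise she receives `0` of some wanted good. Since `γ*` is positive and can only shrink when
reports grow, truth-telling is dominant and every dominant report contains the true set.
Dominance against arbitrary reports of the others then shows that replacing one agent's true set
by her dominant report leaves `γ*` unchanged; swapping the agents one at a time, `γ*` at a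
dominant-strategy profile equals `γ*` at the truthful one. That is the maxmin value, because for
any valid `y` the scale `min_i u_i(y)` is feasible: `min_i u_i(y) · Σ_i w_ij ≤ Σ_i y_ij ≤ s_j`.
-/

open scoped Classical
open Real

namespace BandwidthAlloc

/-- A bid: `none` denotes the special bid β; `some r` denotes the real bid `r ≥ 0`. -/
abbrev Bid := Option NNReal

/-- Numeric value of a bid (β is treated as 0 in arithmetic). -/
noncomputable def bval (b : Bid) : ℝ := ((b.getD 0 : NNReal) : ℝ)

/-- A bid is positive when it is neither 0 nor β. -/
def posBid (b : Bid) : Prop := 0 < bval b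

/-- Utility of the bundle `xi` for an agent with desired set `Ri`: `min_{j ∈ Ri} xi j`. -/
noncomputable def bundleUtil {m : ℕ} (Ri : Finset (Fin m)) (xi : Fin m → ℝ) : ℝ :=
  sInf (xi '' (Ri : Set (Fin m)))

/-- Bandwidth-allocation utility of agent `i` under allocation `x`. -/
noncomputable def util {n m : ℕ} (R : Fin n → Finset (Fin m))
    (x : Fin n → Fin m → ℝ) (i : Fin n) : ℝ :=
  bundleUtil (R i) (x i)

/-- Weights: `w R i j = 1` iff `j ∈ R i`, else `0`. -/
noncomputable def w {n m : ℕ} (R : Fin n → Finset (Fin m)) (i : Fin n) (j : Fin m) : ℝ :=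
  if j ∈ R i then 1 else 0

/-- A valid (nonnegative, supply-respecting) allocation. -/
def validAlloc {n m : ℕ} (s : Fin m → ℝ) (x : Fin n → Fin m → ℝ) : Prop :=
  (∀ i j, 0 ≤ x i j) ∧ ∀ j, ∑ i, x i j ≤ s j

/-- CES welfare of the utility vector `v` (`ρ = 0` is Nash welfare; for `ρ < 0` a zero
utility yields welfare `0`, the limiting convention). -/
noncomputable def ces (ρ : ℝ) {n : ℕ} (v : Fin n → ℝ) : ℝ :=
  if ρ = 0 then ∏ i, v i
  else if ρ < 0 ∧ ∃ i, v i = 0 then 0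
  else (∑ i, v i ^ ρ) ^ (1 / ρ)

/-- `Ψ_ρ`: `x` is a valid allocation maximizing CES welfare among valid allocations. -/
def maxCES (ρ : ℝ) {n m : ℕ} (s : Fin m → ℝ) (R : Fin n → Finset (Fin m))
    (x : Fin n → Fin m → ℝ) : Prop :=
  validAlloc s x ∧ ∀ y, validAlloc s y → ces ρ (util R y) ≤ ces ρ (util R x)

/-- Constraint curve: continuous, normalized, strictly increasing, nonnegative on `[0,∞)`. -/
def IsConstraintCurve (f : ℝ → ℝ) : Prop :=
  ContinuousOn f (Set.Ici 0) ∧ f 0 = 0 ∧ StrictMonoOn f (Set.Ici 0) ∧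
    ∀ y ∈ Set.Ici (0 : ℝ), 0 ≤ f y

/-- `g` is identically zero on `[0,∞)`. -/
def zeroOn (g : ℝ → ℝ) : Prop := ∀ y ∈ Set.Ici (0 : ℝ), g y = 0

/-- Price curve: continuous, normalized, nonnegative, and either strictly increasing or
identically zero on `[0,∞)`. -/
def IsPriceCurve (g : ℝ → ℝ) : Prop :=
  ContinuousOn g (Set.Ici 0) ∧ g 0 = 0 ∧ (∀ y ∈ Set.Ici (0 : ℝ), 0 ≤ g y) ∧
    (StrictMonoOn g (Set.Ici 0) ∨ zeroOn g)

/-- Cost of the bundle `xi` under price curves `g`. -/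
noncomputable def cost {m : ℕ} (g : Fin m → ℝ → ℝ) (xi : Fin m → ℝ) : ℝ :=
  ∑ j, g j (xi j)

/-- `xi` is in the demand set of an agent with desired set `Ri` under price curves `g`. -/
def inDemand {m : ℕ} (g : Fin m → ℝ → ℝ) (Ri : Finset (Fin m)) (xi : Fin m → ℝ) : Prop :=
  (∀ j, 0 ≤ xi j) ∧ cost g xi ≤ 1 ∧
    ∀ yi : Fin m → ℝ, (∀ j, 0 ≤ yi j) → cost g yi ≤ 1 → bundleUtil Ri yi ≤ bundleUtil Ri xi

/-- Price curve equilibrium. -/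
def isPCE {n m : ℕ} (s : Fin m → ℝ) (R : Fin n → Finset (Fin m))
    (x : Fin n → Fin m → ℝ) (g : Fin m → ℝ → ℝ) : Prop :=
  (∀ i, inDemand g (R i) (x i)) ∧ (∀ j, ∑ i, x i j ≤ s j) ∧
    ∀ j, ¬ zeroOn (g j) → ∑ i, x i j = s j

/-- Step 1 of the ATP allocation rule: proportional sharing. -/
noncomputable def atp1 {n m : ℕ} (s : Fin m → ℝ) (b : Fin n → Fin m → Bid)
    (i : Fin n) (j : Fin m) : ℝ :=
  bval (b i j) / (∑ k, bval (b k j)) * s j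

/-- Steps 1–2 of the ATP allocation rule: goods with a positive bid are shared
proportionally; on a good where everyone bids `0` or `β`, an agent bidding `β` receives
as much as she receives of some fixed good on which she bids positively. -/
noncomputable def atp2 {n m : ℕ} (s : Fin m → ℝ) (b : Fin n → Fin m → Bid)
    (i : Fin n) (j : Fin m) : ℝ :=
  if ∃ k, posBid (b k j) then atp1 s b i j
  else if b i j = none then
    (if h : ∃ ℓ, posBid (b i ℓ) then atp1 s b i (Classical.choose h) else 0)
  else 0

/-- The full ATP allocation rule (steps 1–3): agents bidding `β` on an oversubscribed
step-2 good are penalized with the zero bundle. -/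
noncomputable def atp {n m : ℕ} (s : Fin m → ℝ) (b : Fin n → Fin m → Bid)
    (i : Fin n) (j : Fin m) : ℝ :=
  if ∃ ℓ, (¬ ∃ k, posBid (b k ℓ)) ∧ b i ℓ = none ∧ s ℓ < ∑ k, atp2 s b k ℓ then 0
  else atp2 s b i j

/-- Total bid-constraint cost `C_f(b_i)` of agent `i`'s bid vector. -/
noncomputable def bidCost {m : ℕ} (f : Fin m → ℝ → ℝ) (bi : Fin m → Bid) : ℝ :=
  ∑ j, f j (bval (bi j))

/-- A bid vector is feasible if it obeys the bid constraint `C_f(b_i) ≤ 1`. -/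
def feasibleBid {m : ℕ} (f : Fin m → ℝ → ℝ) (bi : Fin m → Bid) : Prop :=
  bidCost f bi ≤ 1

/-- `b` is a Nash equilibrium of `ATP(f)`: all bids are feasible and no agent can
strictly increase her utility by a unilateral feasible deviation. -/
def isNE {n m : ℕ} (s : Fin m → ℝ) (f : Fin m → ℝ → ℝ)
    (R : Fin n → Finset (Fin m)) (b : Fin n → Fin m → Bid) : Prop :=
  (∀ i, feasibleBid f (b i)) ∧
    ∀ (i : Fin n) (bi' : Fin m → Bid), feasibleBid f bi' →
      util R (atp s (Function.update b i bi')) i ≤ util R (atp s b) i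

/-- `NE_X(ATP(f))`: allocations arising from Nash equilibrium bid profiles. -/
def NEX {n m : ℕ} (s : Fin m → ℝ) (f : Fin m → ℝ → ℝ)
    (R : Fin n → Finset (Fin m)) : Set (Fin n → Fin m → ℝ) :=
  {x | ∃ b, isNE s f R b ∧ x = atp s b}

/-- `f` is homogeneous of degree `α` on the nonnegative reals. -/
def Homog (f : ℝ → ℝ) (α : ℝ) : Prop :=
  ∀ c ≥ (0 : ℝ), ∀ y ≥ (0 : ℝ), f (c * y) = c ^ α * f y

/-- `γ* = max {γ ≥ 0 : γ · Σ_i w_{ij} ≤ s_j for all j}` of Mechanism 1. -/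
noncomputable def gammaStar {n m : ℕ} (s : Fin m → ℝ) (R : Fin n → Finset (Fin m)) : ℝ :=
  sSup {γ : ℝ | 0 ≤ γ ∧ ∀ j, γ * ∑ i, w R i j ≤ s j}

/-- Mechanism 1: `x i j = γ* · w i j`. -/
noncomputable def mech1 {n m : ℕ} (s : Fin m → ℝ) (R : Fin n → Finset (Fin m)) :
    Fin n → Fin m → ℝ :=
  fun i j => gammaStar s R * w R i j

/-- `min_i u_i(x_i)`. -/
noncomputable def minUtil {n m : ℕ} (R : Fin n → Finset (Fin m))
    (x : Fin n → Fin m → ℝ) : ℝ :=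
  sInf (Set.range fun i => util R x i)

/-- `x` is maxmin-optimal: valid and attaining the maximum of `min_i u_i` over valid
allocations. -/
def maxminOptimal {n m : ℕ} (s : Fin m → ℝ) (R : Fin n → Finset (Fin m))
    (x : Fin n → Fin m → ℝ) : Prop :=
  validAlloc s x ∧ ∀ y, validAlloc s y → minUtil R y ≤ minUtil R x

/-- Mechanism 2: `P i k` is the set agent `i` claims agent `k` desires.
`eta P i = |{k : R_k(k) ≠ R_k(i)}|`. -/
noncomputable def eta {n m : ℕ} (P : Fin n → Fin n → Finset (Fin m)) (i : Fin n) : ℕ :=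
  (Finset.univ.filter fun k => P k k ≠ P i k).card

/-- Agent `i` is in `N̄`: for some `k`, `R_k(k) ⊊ R_k(i)`. -/
def inNbar {n m : ℕ} (P : Fin n → Fin n → Finset (Fin m)) (i : Fin n) : Prop :=
  ∃ k, P k k ⊂ P i k

/-- The penalty factor `α_i` of Mechanism 2. -/
noncomputable def alpha {n m : ℕ} (P : Fin n → Fin n → Finset (Fin m)) (i : Fin n) : ℝ :=
  if inNbar P i then 0 else 1 - (eta P i : ℝ) / n

/-- Effective reported sets of Mechanism 2: agents in `N̄` are replaced by `∅`. -/
noncomputable def effSets {n m : ℕ} (P : Fin n → Fin n → Finset (Fin m)) :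
    Fin n → Finset (Fin m) :=
  fun i => if inNbar P i then ∅ else P i i

/-- Mechanism 2: the allocation `x_i = α_i · y_i` where `y` is the Mechanism 1 outcome
on the effective sets. -/
noncomputable def mech2 {n m : ℕ} (s : Fin m → ℝ) (P : Fin n → Fin n → Finset (Fin m)) :
    Fin n → Fin m → ℝ :=
  fun i j => alpha P i * mech1 s (effSets P) i j

/-- A (nonempty) report `Ri'` is a dominant strategy in Mechanism 1 for agent `i` with
true desired set `Rt i`: against every profile of (nonempty) reports of the others, it
yields true utility at least that of any alternative (nonempty) report. -/
def dominantForMech1 {n m : ℕ} (s : Fin m → ℝ) (Rt : Fin n → Finset (Fin m))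
    (i : Fin n) (Ri' : Finset (Fin m)) : Prop :=
  Ri'.Nonempty ∧
    ∀ Rr : Fin n → Finset (Fin m), (∀ k, (Rr k).Nonempty) →
      ∀ Ri'' : Finset (Fin m), Ri''.Nonempty →
        bundleUtil (Rt i) (mech1 s (Function.update Rr i Ri'') i) ≤
          bundleUtil (Rt i) (mech1 s (Function.update Rr i Ri') i)

open Function Filter Topology

theorem apply_eq_of_forall_update_eq {ι α β : Type*} [Fintype ι] [DecidableEq ι]
    (f : (ι → α) → β) {a b : ι → α}
    (h : ∀ Q : ι → α, (∀ k, Q k = a k ∨ Q k = b k) →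
      ∀ i, f (update Q i (a i)) = f (update Q i (b i))) :
    f a = f b := by
  have hybrid : ∀ S : Finset ι, f (S.piecewise a b) = f b := by
    intro S
    induction S using Finset.induction_on with
    | empty => rw [Finset.piecewise_empty]
    | insert i S hi ih =>
      have hQ : ∀ k, S.piecewise a b k = a k ∨ S.piecewise a b k = b k := fun k => by
        by_cases hk : k ∈ S <;> simp [hk]
      rw [Finset.piecewise_insert, h _ hQ i, ← ih,
        update_eq_self_iff.2 (S.piecewise_eq_of_notMem a b hi).symm]
  simpa using hybrid Finset.univ

section ScaleSet

variable {ι : Type*} {s c : ι → ℝ}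

-- `gammaStar s R` is by definition `sSup (scaleSet s fun j => ∑ i, w R i j)`.
def scaleSet (s c : ι → ℝ) : Set ℝ := {γ | 0 ≤ γ ∧ ∀ j, γ * c j ≤ s j}

lemma scaleSet_anti {c' : ι → ℝ} (hc : c ≤ c') : scaleSet s c' ⊆ scaleSet s c :=
  fun _ ⟨hγ, hγc'⟩ => ⟨hγ, fun j => (mul_le_mul_of_nonneg_left (hc j) hγ).trans (hγc' j)⟩

lemma zero_mem_scaleSet (hs : ∀ j, 0 ≤ s j) : (0 : ℝ) ∈ scaleSet s c :=
  ⟨le_rfl, fun j => by simpa using hs j⟩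

lemma isClosed_scaleSet : IsClosed (scaleSet s c) := by
  simp only [scaleSet, Set.ofPred_and, Set.ofPred_forall]
  exact (isClosed_le continuous_const continuous_id).inter <| isClosed_iInter fun _ =>
    isClosed_le (continuous_id.mul continuous_const) continuous_const

lemma bddAbove_scaleSet {j₀ : ι} (hc : 0 < c j₀) : BddAbove (scaleSet s c) :=
  ⟨s j₀ / c j₀, fun _ ⟨_, hγc⟩ => (le_div_iff₀ hc).2 (hγc j₀)⟩

lemma sSup_scaleSet_mem (hs : ∀ j, 0 ≤ s j) {j₀ : ι} (hc : 0 < c j₀) :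
    sSup (scaleSet s c) ∈ scaleSet s c :=
  isClosed_scaleSet.csSup_mem ⟨0, zero_mem_scaleSet hs⟩ (bddAbove_scaleSet hc)

lemma exists_pos_mem_scaleSet [Finite ι] (hs : ∀ j, 0 < s j) : ∃ γ > 0, γ ∈ scaleSet s c := by
  have hsmall : ∀ j, ∀ᶠ γ in 𝓝[>] (0 : ℝ), γ * c j ≤ s j := fun j =>
    nhdsWithin_le_nhds <| ((continuous_id.mul continuous_const).tendsto' 0 0 (by simp)).eventually
      (ge_mem_nhds (hs j))
  obtain ⟨γ, hγ, hγc⟩ := (eventually_mem_nhdsWithin.and (eventually_all.2 hsmall)).exists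
  exact ⟨γ, hγ, hγ.le, hγc⟩

end ScaleSet

section Mechanism1

variable {n m : ℕ} {s : Fin m → ℝ} {R R' : Fin n → Finset (Fin m)} {T : Finset (Fin m)}

lemma bundleUtil_le {xi : Fin m → ℝ} {j : Fin m} (hj : j ∈ T) : bundleUtil T xi ≤ xi j :=
  csInf_le (T.finite_toSet.image xi).bddBelow ⟨j, hj, rfl⟩

lemma le_bundleUtil {xi : Fin m → ℝ} {a : ℝ} (hT : T.Nonempty) (h : ∀ j ∈ T, a ≤ xi j) :
    a ≤ bundleUtil T xi :=
  le_csInf ((Finset.coe_nonempty.2 hT).image xi) (by rintro _ ⟨j, hj, rfl⟩; exact h j hj)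

lemma minUtil_le (x : Fin n → Fin m → ℝ) (i : Fin n) : minUtil R x ≤ util R x i :=
  csInf_le (Set.finite_range _).bddBelow ⟨i, rfl⟩

lemma le_minUtil [Nonempty (Fin n)] {x : Fin n → Fin m → ℝ} {a : ℝ}
    (h : ∀ i, a ≤ util R x i) : a ≤ minUtil R x :=
  le_csInf (Set.range_nonempty _) (by rintro _ ⟨i, rfl⟩; exact h i)

lemma w_nonneg (R : Fin n → Finset (Fin m)) (i : Fin n) (j : Fin m) : 0 ≤ w R i j := by
  unfold w; split_ifs <;> norm_num

lemma sum_w_pos {i : Fin n} {j : Fin m} (h : j ∈ R i) : 0 < ∑ k, w R k j :=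
  Finset.sum_pos' (fun k _ => w_nonneg R k j) ⟨i, Finset.mem_univ i, by simp [w, h]⟩

lemma sum_w_mono (hRR' : R ≤ R') (j : Fin m) : ∑ i, w R i j ≤ ∑ i, w R' i j := by
  refine Finset.sum_le_sum fun i _ => ?_
  unfold w
  split_ifs with h h'
  exacts [le_rfl, absurd (hRR' i h) h', zero_le_one, le_rfl]

lemma gammaStar_nonneg : 0 ≤ gammaStar s R :=
  Real.sSup_nonneg fun _ hγ => hγ.1

lemma gammaStar_mul_sum_w_le (hs : ∀ j, 0 ≤ s j) (j : Fin m) :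
    gammaStar s R * ∑ i, w R i j ≤ s j := by
  by_cases hj : ∃ i, j ∈ R i
  · obtain ⟨i, hi⟩ := hj
    exact (sSup_scaleSet_mem hs (sum_w_pos hi)).2 j
  · push Not at hj
    simpa [w, hj] using hs j

lemma le_gammaStar {γ : ℝ} {i : Fin n} {j : Fin m} (hj : j ∈ R i)
    (hγ : γ ∈ scaleSet s fun j => ∑ i, w R i j) : γ ≤ gammaStar s R :=
  le_csSup (bddAbove_scaleSet (sum_w_pos hj)) hγ

lemma gammaStar_pos (hs : ∀ j, 0 < s j) {i : Fin n} {j : Fin m} (hj : j ∈ R i) :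
    0 < gammaStar s R :=
  let ⟨_, hγ, hγS⟩ := exists_pos_mem_scaleSet hs
  hγ.trans_le (le_gammaStar hj hγS)

lemma gammaStar_anti (hs : ∀ j, 0 ≤ s j) (hRR' : R ≤ R') {i : Fin n} {j : Fin m}
    (hj : j ∈ R i) : gammaStar s R' ≤ gammaStar s R :=
  csSup_le_csSup (bddAbove_scaleSet (sum_w_pos hj)) ⟨0, zero_mem_scaleSet hs⟩
    (scaleSet_anti (sum_w_mono hRR'))

lemma validAlloc_mech1 (hs : ∀ j, 0 ≤ s j) (R : Fin n → Finset (Fin m)) :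
    validAlloc s (mech1 s R) :=
  ⟨fun i j => mul_nonneg gammaStar_nonneg (w_nonneg R i j),
    fun j => (Finset.mul_sum _ _ _).symm.le.trans (gammaStar_mul_sum_w_le hs j)⟩

lemma bundleUtil_mech1 (hT : T.Nonempty) (i : Fin n) :
    bundleUtil T (mech1 s R i) = if T ⊆ R i then gammaStar s R else 0 := by
  split_ifs with hTR
  · have hval : ∀ j ∈ T, mech1 s R i j = gammaStar s R := fun j hj => by
      simp [mech1, w, hTR hj]
    obtain ⟨j, hj⟩ := hT
    exact le_antisymm ((bundleUtil_le hj).trans (hval j hj).le)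
      (le_bundleUtil ⟨j, hj⟩ fun k hk => (hval k hk).ge)
  · obtain ⟨j, hjT, hjR⟩ := Finset.not_subset.mp hTR
    refine le_antisymm ?_ (le_bundleUtil hT fun j _ => mul_nonneg gammaStar_nonneg (w_nonneg R i j))
    simpa [mech1, w, hjR] using bundleUtil_le (xi := mech1 s R i) hjT

lemma dominantForMech1_self (hs : ∀ j, 0 ≤ s j) {Rt : Fin n → Finset (Fin m)} {i : Fin n}
    (hRt : (Rt i).Nonempty) : dominantForMech1 s Rt i (Rt i) := by
  refine ⟨hRt, fun Q _ R'' _ => ?_⟩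
  obtain ⟨j, hj⟩ := hRt
  simp only [bundleUtil_mech1 ⟨j, hj⟩, update_self, subset_refl, if_true]
  split_ifs with hsub
  · exact gammaStar_anti hs (update_mono hsub) (i := i) (by simpa using hj)
  · exact gammaStar_nonneg

variable {Rt : Fin n → Finset (Fin m)} {i : Fin n} {Ri' : Finset (Fin m)}

lemma subset_of_dominantForMech1 (hs : ∀ j, 0 < s j) (hRt : ∀ k, (Rt k).Nonempty)
    (h : dominantForMech1 s Rt i Ri') : Rt i ⊆ Ri' := by
  by_contra hsub
  obtain ⟨j, hj⟩ := hRt i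
  have hle := h.2 Rt hRt (Rt i) ⟨j, hj⟩
  rw [update_eq_self, bundleUtil_mech1 ⟨j, hj⟩, bundleUtil_mech1 ⟨j, hj⟩, update_self,
    if_pos subset_rfl, if_neg hsub] at hle
  exact (gammaStar_pos hs hj).not_ge hle

lemma gammaStar_update_eq_of_dominantForMech1 (hs : ∀ j, 0 < s j)
    (hRt : ∀ k, (Rt k).Nonempty) (h : dominantForMech1 s Rt i Ri')
    {Q : Fin n → Finset (Fin m)} (hQ : ∀ k, (Q k).Nonempty) :
    gammaStar s (update Q i Ri') = gammaStar s (update Q i (Rt i)) := by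
  have hsub := subset_of_dominantForMech1 hs hRt h
  obtain ⟨j, hj⟩ := hRt i
  refine le_antisymm
    (gammaStar_anti (fun j => (hs j).le) (update_mono hsub) (i := i) (by simpa using hj)) ?_
  simpa [bundleUtil_mech1 ⟨j, hj⟩, hsub] using h.2 Q hQ (Rt i) ⟨j, hj⟩

lemma gammaStar_eq_of_dominantForMech1 (hs : ∀ j, 0 < s j) (hRt : ∀ k, (Rt k).Nonempty)
    {Rr : Fin n → Finset (Fin m)} (hRr : ∀ k, (Rr k).Nonempty)
    (hdom : ∀ k, dominantForMech1 s Rt k (Rr k)) : gammaStar s Rr = gammaStar s Rt :=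
  apply_eq_of_forall_update_eq (gammaStar s) fun _ hQ i =>
    gammaStar_update_eq_of_dominantForMech1 hs hRt (hdom i) fun k =>
      (hQ k).elim (· ▸ hRr k) (· ▸ hRt k)

lemma minUtil_le_gammaStar [Nonempty (Fin n)] (hRt : ∀ k, (Rt k).Nonempty)
    {y : Fin n → Fin m → ℝ} (hy : validAlloc s y) : minUtil Rt y ≤ gammaStar s Rt := by
  obtain ⟨j₀, hj₀⟩ := hRt (Classical.arbitrary _)
  refine le_gammaStar hj₀ ⟨le_minUtil fun i => le_bundleUtil (hRt i) fun j _ => hy.1 i j,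
    fun j => ?_⟩
  have hpoint : ∀ i, minUtil Rt y * w Rt i j ≤ y i j := fun i => by
    unfold w
    split_ifs with h
    · rw [mul_one]; exact (minUtil_le y i).trans (bundleUtil_le h)
    · rw [mul_zero]; exact hy.1 i j
  calc minUtil Rt y * ∑ i, w Rt i j = ∑ i, minUtil Rt y * w Rt i j := Finset.mul_sum _ _ _
    _ ≤ ∑ i, y i j := Finset.sum_le_sum fun i _ => hpoint i
    _ ≤ s j := hy.2 j

lemma maxminOptimal_of_util_eq_gammaStar (hRt : ∀ k, (Rt k).Nonempty)
    {x : Fin n → Fin m → ℝ} (hx : validAlloc s x) (hu : ∀ i, util Rt x i = gammaStar s Rt) :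
    maxminOptimal s Rt x := by
  refine ⟨hx, fun y hy => ?_⟩
  cases isEmpty_or_nonempty (Fin n)
  · -- with no agents both minima are `sInf ∅ = 0`
    simp [minUtil, Set.range_eq_empty]
  · have hmin : minUtil Rt x = gammaStar s Rt := by
      simp only [minUtil, hu, Set.range_const, csInf_singleton]
    exact hmin ▸ minUtil_le_gammaStar hRt hy

end Mechanism1

/-- Mechanism 1 DSE-implements maxmin welfare: truth-telling is a
dominant strategy equilibrium, every dominant strategy equilibrium yields a
maxmin-optimal allocation w.r.t. the true utilities, and in every dominant strategy
equilibrium each agent's true utility equals her true utility in the truthful outcome. -/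
theorem mech1_dse_implements {n m : ℕ} (s : Fin m → ℝ) (hs : ∀ j, 0 < s j)
    (Rt : Fin n → Finset (Fin m)) (hRt : ∀ i, (Rt i).Nonempty) :
    (∀ i, dominantForMech1 s Rt i (Rt i)) ∧
      ∀ Rr : Fin n → Finset (Fin m), (∀ i, (Rr i).Nonempty) →
        (∀ i, dominantForMech1 s Rt i (Rr i)) →
        maxminOptimal s Rt (mech1 s Rr) ∧
          ∀ i, bundleUtil (Rt i) (mech1 s Rr i) =
            bundleUtil (Rt i) (mech1 s Rt i) := by
  have hs₀ : ∀ j, 0 ≤ s j := fun j => (hs j).le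
  refine ⟨fun i => dominantForMech1_self hs₀ (hRt i), fun Rr hRr hdom => ?_⟩
  have hutil : ∀ i, bundleUtil (Rt i) (mech1 s Rr i) = gammaStar s Rt := fun i => by
    rw [bundleUtil_mech1 (hRt i), if_pos (subset_of_dominantForMech1 hs hRt (hdom i)),
      gammaStar_eq_of_dominantForMech1 hs hRt hRr hdom]
  refine ⟨maxminOptimal_of_util_eq_gammaStar hRt (validAlloc_mech1 hs₀ Rr) hutil, fun i => ?_⟩
  rw [hutil, bundleUtil_mech1 (hRt i), if_pos subset_rfl]

end BandwidthAlloc
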